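/- arXiv:1703.09155 — 2 statements merged into one kernel-verified Lean document; each statement's English description precedes it below -/
import Mathlib

section
/- For any surjective quandle homomorphism f : A → B, the canonical map ⟨f, η_A⟩ : A → B ×_{π₀(B)} π₀(A), a ↦ (f(a), [a]), into the pullback of π₀(f) : π₀(A) → π₀(B) along η_B : B → π₀(B) is surjective. -/
/-- A quandle in the sense of the paper: a set with two binary operations
`act` (`◁`) and `inv` (`◁⁻¹`) satisfying idempotency, right invertibility
and (right) self-distributivity. -/
class Quandle' (A : Type*) where
  act : A → A → A
  inv : A → A → A
  idem : ∀ a, act a a = a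
  inv_act : ∀ a b, inv (act a b) b = a
  act_inv : ∀ a b, act (inv a b) b = a
  distrib : ∀ a b c, act (act a b) c = act (act a c) (act b c)

open Quandle'

/-- A quandle homomorphism preserves both operations. -/
def IsQuandleHom {A B : Type*} [Quandle' A] [Quandle' B] (f : A → B) : Prop :=
  (∀ a a', f (act a a') = act (f a) (f a')) ∧
  (∀ a a', f (inv a a') = inv (f a) (f a'))

/-- The right translation `ρ_b : a ↦ a ◁ b`, as a permutation of `A`. -/
def rho {A : Type*} [Quandle' A] (b : A) : Equiv.Perm A :=
  ⟨fun a => act a b, fun a => inv a b, fun a => inv_act a b, fun a => act_inv a b⟩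

/-- The group of inner automorphisms of a quandle, as a subgroup of `Equiv.Perm A`. -/
def Inn (A : Type*) [Quandle' A] : Subgroup (Equiv.Perm A) :=
  Subgroup.closure (Set.range (rho (A := A)))

/-- The orbit relation `∼_N` associated with a subgroup `N ≤ Perm A`. -/
def orbitRel {A : Type*} [Quandle' A] (N : Subgroup (Equiv.Perm A)) (a b : A) : Prop :=
  ∃ n ∈ N, n a = b

/-- Two elements are in the same connected component when they are in the
same orbit of `Inn A`. -/
def sameComponent {A : Type*} [Quandle' A] (a b : A) : Prop :=
  orbitRel (Inn A) a b

/-- Trivial extension: a surjective quandle homomorphism such that elements with the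
same image lying in the same connected component are equal (condition (T)). -/
def IsTrivialExt {A B : Type*} [Quandle' A] [Quandle' B] (f : A → B) : Prop :=
  Function.Surjective f ∧ IsQuandleHom f ∧
    ∀ a a', f a = f a' → sameComponent a a' → a = a'

/-- Evaluation of a word `a₀ ◁^{α₁} a₁ ◁^{α₂} ⋯ ◁^{αₙ} aₙ`; `true` stands for
exponent `1` and `false` for exponent `-1`. -/
def wordEval {A : Type*} [Quandle' A] (a₀ : A) (l : List (Bool × A)) : A :=
  l.foldl (fun x p => if p.1 then act x p.2 else inv x p.2) a₀

/-- Condition (N) characterizing normal extensions. -/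
def CondN {A B : Type*} [Quandle' A] [Quandle' B] (f : A → B) : Prop :=
  ∀ (a₀ : A) (l : List (Bool × A)), wordEval a₀ l = a₀ →
    ∀ (a₀' : A) (l' : List (Bool × A)), f a₀' = f a₀ →
      List.Forall₂ (fun p q => p.1 = q.1 ∧ f p.2 = f q.2) l l' →
      wordEval a₀' l' = a₀'

/-- Normal extension (via condition (N)). -/
def IsNormalExt {A B : Type*} [Quandle' A] [Quandle' B] (f : A → B) : Prop :=
  Function.Surjective f ∧ IsQuandleHom f ∧ CondN f

/-- Quandle covering in the sense of Eisermann (= central extension). -/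
def IsCovering {A B : Type*} [Quandle' A] [Quandle' B] (f : A → B) : Prop :=
  Function.Surjective f ∧ IsQuandleHom f ∧
    ∀ a a' c, f a = f a' → act c a = act c a'

/-- A congruence on a quandle: an equivalence relation compatible with both operations. -/
def IsCongruence {A : Type*} [Quandle' A] (r : A → A → Prop) : Prop :=
  Equivalence r ∧
    ∀ a a' b b', r a b → r a' b' → r (act a a') (act b b') ∧ r (inv a a') (inv b b')

/-- Relational composition: `(a,b) ∈ relComp S R` iff `∃ c, R a c ∧ S c b`. -/
def relComp {X : Type*} (S R : X → X → Prop) (a b : X) : Prop :=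
  ∃ c, R a c ∧ S c b

/-- The kernel congruence of a map. -/
def eqRel {A B : Type*} (f : A → B) (a a' : A) : Prop := f a = f a'

/-- The image of a relation along a map. -/
def imageRel {A B : Type*} (f : A → B) (R : A → A → Prop) (b b' : B) : Prop :=
  ∃ a a', R a a' ∧ f a = b ∧ f a' = b'

instance prodQuandle {A B : Type*} [Quandle' A] [Quandle' B] : Quandle' (A × B) where
  act p q := (act p.1 q.1, act p.2 q.2)
  inv p q := (inv p.1 q.1, inv p.2 q.2)
  idem p := Prod.ext (idem p.1) (idem p.2)
  inv_act p q := Prod.ext (inv_act p.1 q.1) (inv_act p.2 q.2)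
  act_inv p q := Prod.ext (act_inv p.1 q.1) (act_inv p.2 q.2)
  distrib p q r := Prod.ext (distrib p.1 q.1 r.1) (distrib p.2 q.2 r.2)

/-- The pullback of `f : A → C` and `g : B → C` as a set. -/
def Pullback {A B C : Type*} (f : A → C) (g : B → C) : Type _ :=
  { p : A × B // f p.1 = g p.2 }

/-- The quandle structure on a pullback of two quandle homomorphisms. -/
def pullbackQuandle {A B C : Type*} [Quandle' A] [Quandle' B] [Quandle' C]
    (f : A → C) (g : B → C) (hf : IsQuandleHom f) (hg : IsQuandleHom g) :
    Quandle' (Pullback f g) where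
  act p q := ⟨act p.1 q.1, by
    show f (act p.1.1 q.1.1) = g (act p.1.2 q.1.2)
    rw [hf.1, hg.1, p.2, q.2]⟩
  inv p q := ⟨inv p.1 q.1, by
    show f (inv p.1.1 q.1.1) = g (inv p.1.2 q.1.2)
    rw [hf.2, hg.2, p.2, q.2]⟩
  idem p := Subtype.ext (idem p.1)
  inv_act p q := Subtype.ext (inv_act p.1 q.1)
  act_inv p q := Subtype.ext (act_inv p.1 q.1)
  distrib p q r := Subtype.ext (distrib p.1 q.1 r.1)

/-- The congruence generated by a relation `R`. -/
def congClosure {A : Type*} [Quandle' A] (R : A → A → Prop) (a b : A) : Prop :=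
  ∀ S : A → A → Prop, IsCongruence S → (∀ x y, R x y → S x y) → S a b

/-- The congruence generated by `R`, as a setoid. -/
def congClosureSetoid {A : Type*} [Quandle' A] (R : A → A → Prop) : Setoid A :=
  ⟨congClosure R,
    ⟨fun a S hS _ => hS.1.refl a,
     fun h S hS hR => hS.1.symm (h S hS hR),
     fun h1 h2 S hS hR => hS.1.trans (h1 S hS hR) (h2 S hS hR)⟩⟩

/-- The quotient quandle by the congruence generated by `R`. -/
def quotQuandle {A : Type*} [Quandle' A] (R : A → A → Prop) :
    Quandle' (Quotient (congClosureSetoid R)) where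
  act := Quotient.map₂ act
    (fun _ _ h _ _ h' S hS hR => (hS.2 _ _ _ _ (h S hS hR) (h' S hS hR)).1)
  inv := Quotient.map₂ inv
    (fun _ _ h _ _ h' S hS hR => (hS.2 _ _ _ _ (h S hS hR) (h' S hS hR)).2)
  idem q := Quotient.inductionOn q fun a => congrArg (Quotient.mk _) (idem a)
  inv_act q r := Quotient.inductionOn₂ q r fun a b => congrArg (Quotient.mk _) (inv_act a b)
  act_inv q r := Quotient.inductionOn₂ q r fun a b => congrArg (Quotient.mk _) (act_inv a b)
  distrib q r s := Quotient.inductionOn₃ q r s fun a b c => congrArg (Quotient.mk _) (distrib a b c)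

/-! Along a surjective homomorphism `f`, every inner automorphism of `B` lifts to one of `A`:
the generator `ρ_{f c}` lifts to `ρ_c`. Transporting `a₀` by a lift of the automorphism that
moves `f a₀` to `b` gives the required preimage. -/

theorem rho_mem_Inn {A : Type*} [Quandle' A] (b : A) : rho b ∈ Inn A :=
  Subgroup.subset_closure ⟨b, rfl⟩

theorem sameComponent_apply_left {A : Type*} [Quandle' A] {n : Equiv.Perm A} (hn : n ∈ Inn A)
    (a : A) : sameComponent (n a) a :=
  ⟨n⁻¹, inv_mem hn, Equiv.Perm.inv_eq_iff_eq.2 rfl⟩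

theorem IsQuandleHom.exists_Inn_lift {A B : Type*} [Quandle' A] [Quandle' B] {f : A → B}
    (hf : Function.Surjective f) (hhom : IsQuandleHom f) {m : Equiv.Perm B} (hm : m ∈ Inn B) :
    ∃ n ∈ Inn A, ∀ a, f (n a) = m (f a) := by
  induction hm using Subgroup.closure_induction with
  | mem _ hρ =>
    obtain ⟨c, rfl⟩ := hρ
    obtain ⟨c', rfl⟩ := hf c
    exact ⟨rho c', rho_mem_Inn c', fun a => hhom.1 a c'⟩
  | one => exact ⟨1, one_mem _, fun _ => rfl⟩
  | mul _ _ _ _ ih₁ ih₂ =>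
    obtain ⟨n₁, hn₁, h₁⟩ := ih₁
    obtain ⟨n₂, hn₂, h₂⟩ := ih₂
    exact ⟨n₁ * n₂, mul_mem hn₁ hn₂, fun a => by simp only [Equiv.Perm.mul_apply, h₁, h₂]⟩
  | inv _ _ ih =>
    obtain ⟨n, hn, h⟩ := ih
    refine ⟨n⁻¹, inv_mem hn, fun a => ?_⟩
    rw [eq_comm, Equiv.Perm.inv_eq_iff_eq, ← h, Equiv.Perm.eq_inv_iff_eq.1 rfl]

theorem stmt15 {A B : Type*} [Quandle' A] [Quandle' B] (f : A → B)
    (hf : Function.Surjective f) (hhom : IsQuandleHom f) :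
    ∀ (b : B) (a₀ : A), sameComponent b (f a₀) → ∃ a, f a = b ∧ sameComponent a a₀ := by
  rintro b a₀ ⟨m, hm, hmb⟩
  obtain ⟨n, hn, hlift⟩ := hhom.exists_Inn_lift hf (inv_mem hm)
  refine ⟨n a₀, ?_, sameComponent_apply_left hn a₀⟩
  rw [hlift, ← hmb, Equiv.Perm.inv_eq_iff_eq.2 rfl]
end

section
/- Let f : A → B be a surjective quandle homomorphism and p : E → B a normal extension. Form the pullback E ×_B A with projections p₁, p₂. Then Eq(p₂) ∘ (Eq(p₁) ∩ ∼_{Inn(E×_B A)}) = (Eq(p₁) ∩ ∼_{Inn(E×_B A)}) ∘ Eq(p₂). -/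
open Quandle'

/-!
An element `n` of `Inn (E ×_B A)` acts as a word, and on each coordinate it acts through the
projected word. Hence the `A`-coordinate of `n x` depends only on that of `x`. Condition (N) for
`p` says that if the projected word fixes the `E`-coordinate of some `u`, it fixes the
`E`-coordinate of every point in the same `p`-fibre, in particular of every point with the same
`A`-coordinate as `u`. This lets a step along `Eq(p₂)` and a step by `n` inside `Eq(p₁)` be
exchanged, in either order.
-/

section Words

variable {X Y : Type*} [Quandle' X] [Quandle' Y]

lemma wordEval_append (x : X) (l l' : List (Bool × X)) :
    wordEval x (l ++ l') = wordEval (wordEval x l) l' :=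
  List.foldl_append

lemma exists_wordEval_eq_of_mem_inn {n : Equiv.Perm X} (hn : n ∈ Inn X) :
    ∃ l : List (Bool × X), ∀ x, n x = wordEval x l := by
  induction hn using Subgroup.closure_induction'' with
  | mem _ hg =>
    obtain ⟨b, rfl⟩ := hg
    exact ⟨[(true, b)], fun _ => rfl⟩
  | inv_mem _ hg =>
    obtain ⟨b, rfl⟩ := hg
    exact ⟨[(false, b)], fun _ => rfl⟩
  | one => exact ⟨[], fun _ => rfl⟩
  | mul n m _ _ ihn ihm =>
    obtain ⟨ln, hln⟩ := ihn
    obtain ⟨lm, hlm⟩ := ihm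
    exact ⟨lm ++ ln, fun x => by rw [wordEval_append, ← hlm, ← hln]; rfl⟩

lemma IsQuandleHom.map_wordEval {g : X → Y} (hg : IsQuandleHom g) (x : X)
    (l : List (Bool × X)) :
    g (wordEval x l) = wordEval (g x) (l.map (Prod.map id g)) := by
  induction l generalizing x with
  | nil => rfl
  | cons q l ih =>
    obtain ⟨_ | _, b⟩ := q
    · exact (ih (inv x b)).trans (congrArg (wordEval · _) (hg.2 x b))
    · exact (ih (act x b)).trans (congrArg (wordEval · _) (hg.1 x b))

lemma IsQuandleHom.map_inn_apply_eq {g : X → Y} (hg : IsQuandleHom g)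
    {n : Equiv.Perm X} (hn : n ∈ Inn X) {x y : X} (hxy : g x = g y) :
    g (n x) = g (n y) := by
  obtain ⟨l, hl⟩ := exists_wordEval_eq_of_mem_inn hn
  rw [hl, hl, hg.map_wordEval, hg.map_wordEval, hxy]

lemma CondN.wordEval_eq_self {B : Type*} [Quandle' B] {p : X → B} (hp : CondN p)
    {a a' : X} {l : List (Bool × X)} (h : wordEval a l = a) (ha : p a' = p a) :
    wordEval a' l = a' :=
  hp a l h a' l ha (List.forall₂_same.2 fun _ _ => ⟨rfl, rfl⟩)

lemma CondN.map_inn_apply_eq_self {B : Type*} [Quandle' B] {p : Y → B} (hp : CondN p)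
    {g : X → Y} (hg : IsQuandleHom g) {n : Equiv.Perm X} (hn : n ∈ Inn X) {u w : X}
    (hu : g (n u) = g u) (hw : p (g w) = p (g u)) :
    g (n w) = g w := by
  obtain ⟨l, hl⟩ := exists_wordEval_eq_of_mem_inn hn
  rw [hl, hg.map_wordEval] at hu ⊢
  exact hp.wordEval_eq_self hu hw

end Words

section Pullback

variable {A B E : Type*} {f : A → B} {p : E → B}

lemma Pullback.ext {x y : Pullback p f} (h₁ : x.1.1 = y.1.1) (h₂ : x.1.2 = y.1.2) : x = y :=
  Subtype.ext (Prod.ext h₁ h₂)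

variable [Quandle' A] [Quandle' B] [Quandle' E]

lemma isQuandleHom_pullback_fst (hp : IsQuandleHom p) (hf : IsQuandleHom f) :
    letI : Quandle' (Pullback p f) := pullbackQuandle p f hp hf
    IsQuandleHom (fun x : Pullback p f => x.1.1) :=
  ⟨fun _ _ => rfl, fun _ _ => rfl⟩

lemma isQuandleHom_pullback_snd (hp : IsQuandleHom p) (hf : IsQuandleHom f) :
    letI : Quandle' (Pullback p f) := pullbackQuandle p f hp hf
    IsQuandleHom (fun x : Pullback p f => x.1.2) :=
  ⟨fun _ _ => rfl, fun _ _ => rfl⟩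

lemma pullback_inn_apply_of_snd_eq (hp : IsQuandleHom p) (hpN : CondN p)
    (hf : IsQuandleHom f) :
    letI : Quandle' (Pullback p f) := pullbackQuandle p f hp hf
    ∀ n ∈ Inn (Pullback p f), ∀ u w : Pullback p f, u.1.2 = w.1.2 → (n u).1.1 = u.1.1 →
      (n w).1.1 = w.1.1 ∧ (n w).1.2 = (n u).1.2 := by
  let : Quandle' (Pullback p f) := pullbackQuandle p f hp hf
  intro n hn u w huw hu
  exact ⟨hpN.map_inn_apply_eq_self (isQuandleHom_pullback_fst hp hf) hn hu
      (by rw [w.2, u.2, huw]),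
    ((isQuandleHom_pullback_snd hp hf).map_inn_apply_eq hn huw).symm⟩

end Pullback

theorem stmt16_general {A B E : Type*} [Quandle' A] [Quandle' B] [Quandle' E]
    (f : A → B) (p : E → B) (hfh : IsQuandleHom f)
    (hp : IsNormalExt p) :
    letI : Quandle' (Pullback p f) := pullbackQuandle p f hp.2.1 hfh
    relComp (eqRel (fun x : Pullback p f => x.1.2))
        (fun x y => eqRel (fun x : Pullback p f => x.1.1) x y ∧ sameComponent x y)
      = relComp (fun x y => eqRel (fun x : Pullback p f => x.1.1) x y ∧ sameComponent x y)
        (eqRel (fun x : Pullback p f => x.1.2)) := by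
  have key := pullback_inn_apply_of_snd_eq hp.2.1 hp.2.2 hfh
  funext x y
  refine propext ⟨?_, ?_⟩
  · rintro ⟨c, ⟨hxc, n, hn, rfl⟩, hcy⟩
    dsimp only [eqRel] at hxc hcy
    have hz : p y.1.1 = f x.1.2 := by
      rw [y.2, ← hcy, ← (n x).2, ← hxc, x.2]
    let z : Pullback p f := ⟨(y.1.1, x.1.2), hz⟩
    obtain ⟨hz₁, hz₂⟩ := key n hn x z rfl hxc.symm
    exact ⟨z, rfl, rfl, n, hn, Pullback.ext hz₁ (hz₂.trans hcy)⟩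
  · rintro ⟨c, hxc, hcy, n, hn, rfl⟩
    dsimp only [eqRel] at hxc hcy
    have hz : p x.1.1 = f (n c).1.2 := by
      rw [x.2, hxc, ← c.2, hcy, (n c).2]
    obtain ⟨hx₁, hx₂⟩ := key n hn c x hxc.symm hcy.symm
    let z : Pullback p f := ⟨(x.1.1, (n c).1.2), hz⟩
    exact ⟨z, ⟨rfl, n, hn, Pullback.ext hx₁ hx₂⟩, rfl⟩

theorem stmt16 {A B E : Type*} [Quandle' A] [Quandle' B] [Quandle' E]
    (f : A → B) (p : E → B) (hf : Function.Surjective f) (hfh : IsQuandleHom f)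
    (hp : IsNormalExt p) :
    letI : Quandle' (Pullback p f) := pullbackQuandle p f hp.2.1 hfh
    relComp (eqRel (fun x : Pullback p f => x.1.2))
        (fun x y => eqRel (fun x : Pullback p f => x.1.1) x y ∧ sameComponent x y)
      = relComp (fun x y => eqRel (fun x : Pullback p f => x.1.1) x y ∧ sameComponent x y)
        (eqRel (fun x : Pullback p f => x.1.2)) :=
  stmt16_general f p hfh hp
end
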